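/- Let K be a field of characteristic 0 and let A be the K-algebra generated by x, y with relation yx = q₁xy + q₂x + q₃y + q₄ where q₁ ≠ 0. Then for all n ≥ 1, y·xⁿ - ∑_{j=0}^{n} C(n,j)·q₁^{n-j}·q₃^j·x^{n-j}·y lies in the left K-span of 1, x, x², ..., xⁿ. -/
import Mathlib


/-- The defining relation of `A = K⟨x,y⟩/(yx - q₁xy - q₂x - q₃y - q₄)`. -/
inductive TwoVarRel (K : Type*) [Field K] (q₁ q₂ q₃ q₄ : K) :
    FreeAlgebra K (Fin 2) → FreeAlgebra K (Fin 2) → Prop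
  | rel : TwoVarRel K q₁ q₂ q₃ q₄ (FreeAlgebra.ι K 1 * FreeAlgebra.ι K 0)
      (algebraMap K (FreeAlgebra K (Fin 2)) q₁ * (FreeAlgebra.ι K 0 * FreeAlgebra.ι K 1) +
        algebraMap K (FreeAlgebra K (Fin 2)) q₂ * FreeAlgebra.ι K 0 +
        algebraMap K (FreeAlgebra K (Fin 2)) q₃ * FreeAlgebra.ι K 1 +
        algebraMap K (FreeAlgebra K (Fin 2)) q₄)

/-- The algebra `A = K⟨x,y⟩/(yx - q₁xy - q₂x - q₃y - q₄)`. -/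
abbrev TwoVarAlg (K : Type*) [Field K] (q₁ q₂ q₃ q₄ : K) := RingQuot (TwoVarRel K q₁ q₂ q₃ q₄)

noncomputable def TwoVarAlg.x (K : Type*) [Field K] (q₁ q₂ q₃ q₄ : K) :
    TwoVarAlg K q₁ q₂ q₃ q₄ :=
  RingQuot.mkAlgHom K (TwoVarRel K q₁ q₂ q₃ q₄) (FreeAlgebra.ι K 0)

noncomputable def TwoVarAlg.y (K : Type*) [Field K] (q₁ q₂ q₃ q₄ : K) :
    TwoVarAlg K q₁ q₂ q₃ q₄ :=
  RingQuot.mkAlgHom K (TwoVarRel K q₁ q₂ q₃ q₄) (FreeAlgebra.ι K 1)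

section Aux
variable {K : Type*} [Field K] {q₁ q₂ q₃ q₄ : K}

local notation "X" => TwoVarAlg.x K q₁ q₂ q₃ q₄
local notation "Y" => TwoVarAlg.y K q₁ q₂ q₃ q₄
local notation "C" => algebraMap K (TwoVarAlg K q₁ q₂ q₃ q₄)

theorem TwoVarAlg.rel : Y * X = C q₁ * (X * Y) + C q₂ * X + C q₃ * Y + C q₄ := by
  have := RingQuot.mkAlgHom_rel K (TwoVarRel.rel (K := K) (q₁ := q₁) (q₂ := q₂) (q₃ := q₃) (q₄ := q₄))
  simpa [map_mul, map_add, AlgHom.commutes, TwoVarAlg.x, TwoVarAlg.y] using this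

noncomputable def Sn (K : Type*) [Field K] (q₁ q₂ q₃ q₄ : K) (n : ℕ) :
    Submodule K (TwoVarAlg K q₁ q₂ q₃ q₄) :=
  Submodule.span K {p : TwoVarAlg K q₁ q₂ q₃ q₄ | ∃ i ≤ n, p = TwoVarAlg.x K q₁ q₂ q₃ q₄ ^ i}

theorem Sn_mono {n : ℕ} : Sn K q₁ q₂ q₃ q₄ n ≤ Sn K q₁ q₂ q₃ q₄ (n + 1) :=
  Submodule.span_mono (fun p ⟨i, hi, hp⟩ => ⟨i, hi.trans n.le_succ, hp⟩)

theorem Sn_mulX {n : ℕ} {r : TwoVarAlg K q₁ q₂ q₃ q₄} (hr : r ∈ Sn K q₁ q₂ q₃ q₄ n) :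
    r * X ∈ Sn K q₁ q₂ q₃ q₄ (n + 1) := by
  induction hr using Submodule.span_induction with
  | mem p hp =>
    obtain ⟨i, hi, rfl⟩ := hp
    exact Submodule.subset_span ⟨i + 1, by omega, (pow_succ _ _).symm⟩
  | zero => simpa using (Sn K q₁ q₂ q₃ q₄ (n+1)).zero_mem
  | add a b _ _ ha hb => rw [add_mul]; exact add_mem ha hb
  | smul c a _ ha => rw [smul_mul_assoc]; exact Submodule.smul_mem _ _ ha

theorem Sn_Zpow {n : ℕ} : (C q₁ * X + C q₃) ^ n ∈ Sn K q₁ q₂ q₃ q₄ n := by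
  induction n with
  | zero => refine Submodule.subset_span ⟨0, le_refl 0, by simp⟩
  | succ n ih =>
    have h1 : (C q₁ * X + C q₃)^n * (C q₁ * X) = q₁ • ((C q₁ * X + C q₃)^n * X) := by
      rw [← mul_assoc, ← Algebra.commutes, ← Algebra.smul_def, smul_mul_assoc]
    have h2 : (C q₁ * X + C q₃)^n * C q₃ = q₃ • (C q₁ * X + C q₃)^n := by
      rw [← Algebra.commutes, ← Algebra.smul_def]
    rw [pow_succ, mul_add, h1, h2]
    exact add_mem (Submodule.smul_mem _ _ (Sn_mulX ih)) (Submodule.smul_mem _ _ (Sn_mono ih))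

theorem key (n : ℕ) : Y * X ^ n - (C q₁ * X + C q₃) ^ n * Y ∈ Sn K q₁ q₂ q₃ q₄ n := by
  induction n with
  | zero => simpa using (Sn K q₁ q₂ q₃ q₄ 0).zero_mem
  | succ n ih =>
    have hrel : Y * X = (C q₁ * X + C q₃) * Y + (C q₂ * X + C q₄) := by
      rw [TwoVarAlg.rel]; noncomm_ring
    have h : (Y * X ^ n - (C q₁ * X + C q₃) ^ n * Y) * X
          + (C q₁ * X + C q₃) ^ n * (C q₂ * X + C q₄)
        = Y * X ^ (n + 1) - (C q₁ * X + C q₃) ^ (n + 1) * Y := by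
      rw [sub_mul, mul_assoc ((C q₁ * X + C q₃)^n) Y X, hrel, pow_succ, pow_succ]
      noncomm_ring
    rw [← h]
    have hz : (C q₁ * X + C q₃) ^ n * (C q₂ * X + C q₄) ∈ Sn K q₁ q₂ q₃ q₄ (n + 1) := by
      have h1 : (C q₁ * X + C q₃)^n * (C q₂ * X) = q₂ • ((C q₁ * X + C q₃)^n * X) := by
        rw [← mul_assoc, ← Algebra.commutes, ← Algebra.smul_def, smul_mul_assoc]
      have h2 : (C q₁ * X + C q₃)^n * C q₄ = q₄ • (C q₁ * X + C q₃)^n := by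
        rw [← Algebra.commutes, ← Algebra.smul_def]
      rw [mul_add, h1, h2]
      exact add_mem (Submodule.smul_mem _ _ (Sn_mulX Sn_Zpow))
        (Submodule.smul_mem _ _ (Sn_mono Sn_Zpow))
    exact add_mem (Sn_mulX ih) hz

theorem sum_eq (n : ℕ) :
    ∑ j ∈ Finset.range (n + 1),
        C ((n.choose j : K) * q₁ ^ (n - j) * q₃ ^ j) * (X ^ (n - j) * Y)
      = (C q₁ * X + C q₃) ^ n * Y := by
  have hcomm : Commute (C q₁ * X) (C q₃) := (Algebra.commutes q₃ _).symm
  rw [hcomm.add_pow, Finset.sum_mul, ← Finset.sum_range_reflect]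
  refine Finset.sum_congr rfl fun j hj => ?_
  have hj' : j ≤ n := by simpa [Nat.lt_succ_iff] using Finset.mem_range.mp hj
  have h1 : n + 1 - 1 - j = n - j := by omega
  have h2 : n - (n - j) = j := by omega
  rw [h1, h2, Nat.choose_symm hj']
  rw [show ((n.choose j : ℕ) : TwoVarAlg K q₁ q₂ q₃ q₄) = C ((n.choose j : ℕ) : K) from
    (map_natCast _ _).symm]
  simp only [Algebra.algebraMap_eq_smul_one, Commute.mul_pow (Algebra.commutes q₁ X).symm,
    smul_pow, one_pow, smul_mul_assoc, mul_smul_comm, one_mul, mul_one, smul_smul]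
  congr 1
  ring

end Aux

theorem stmt2 (K : Type*) [Field K] [CharZero K] (q₁ q₂ q₃ q₄ : K) (hq₁ : q₁ ≠ 0)
    (n : ℕ) (hn : 1 ≤ n) :
    TwoVarAlg.y K q₁ q₂ q₃ q₄ * TwoVarAlg.x K q₁ q₂ q₃ q₄ ^ n -
      ∑ j ∈ Finset.range (n + 1),
        algebraMap K (TwoVarAlg K q₁ q₂ q₃ q₄) ((n.choose j : K) * q₁ ^ (n - j) * q₃ ^ j) *
          (TwoVarAlg.x K q₁ q₂ q₃ q₄ ^ (n - j) * TwoVarAlg.y K q₁ q₂ q₃ q₄) ∈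
    Submodule.span K {p : TwoVarAlg K q₁ q₂ q₃ q₄ |
      ∃ i ≤ n, p = TwoVarAlg.x K q₁ q₂ q₃ q₄ ^ i} := by
  rw [sum_eq n]
  exact key n
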